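/- arXiv:1701.00020 — 3 statements merged into one kernel-verified Lean document; each statement's English description precedes it below -/
import Mathlib

section
/- Let (ρ, U) be a natural right absorber in a Hilbert space tensor category C. Then for every object x, the unitary U^x ∈ U(H^x ⊗ H^ρ) satisfies U^x₁₂ U^x₁₃ U^ρ₂₃ = U^ρ₂₃ U^x₁₂ on H^x⊗H^ρ⊗H^ρ; in particular (x = ρ), U^ρ satisfies the pentagon equation and hence is a multiplicative unitary. -/
noncomputable section
open scoped TensorProduct

namespace MU

variable {A B M R : Type*}
  [AddCommMonoid A] [Module ℂ A] [AddCommMonoid B] [Module ℂ B]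
  [AddCommMonoid M] [Module ℂ M] [AddCommMonoid R] [Module ℂ R]

/-- Extend an endomorphism of `A ⊗ B` to `A ⊗ (B ⊗ R)`, acting trivially on the tail `R`.
This realises the leg numbering `T₁₂`. -/
def endTail (T : (A ⊗[ℂ] B) ≃ₗ[ℂ] (A ⊗[ℂ] B)) :
    (A ⊗[ℂ] (B ⊗[ℂ] R)) ≃ₗ[ℂ] (A ⊗[ℂ] (B ⊗[ℂ] R)) :=
  (TensorProduct.assoc ℂ A B R).symm ≪≫ₗ
    TensorProduct.congr T (LinearEquiv.refl ℂ R) ≪≫ₗ TensorProduct.assoc ℂ A B R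

/-- Exchange the first tensor factor with the second one. -/
def exch : (A ⊗[ℂ] (B ⊗[ℂ] M)) ≃ₗ[ℂ] (B ⊗[ℂ] (A ⊗[ℂ] M)) :=
  (TensorProduct.assoc ℂ A B M).symm ≪≫ₗ
    TensorProduct.congr (TensorProduct.comm ℂ A B) (LinearEquiv.refl ℂ M) ≪≫ₗ
    TensorProduct.assoc ℂ B A M

/-- Let an endomorphism of `A ⊗ M` act on `A ⊗ (B ⊗ M)`, skipping the middle leg `B`. -/
def stepMid (T : (A ⊗[ℂ] M) ≃ₗ[ℂ] (A ⊗[ℂ] M)) :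
    (A ⊗[ℂ] (B ⊗[ℂ] M)) ≃ₗ[ℂ] (A ⊗[ℂ] (B ⊗[ℂ] M)) :=
  exch ≪≫ₗ TensorProduct.congr (LinearEquiv.refl ℂ B) T ≪≫ₗ exch

/-- Let an endomorphism of `M` act on `A ⊗ M`, acting trivially on the new leftmost leg. -/
def extL (T : M ≃ₗ[ℂ] M) : (A ⊗[ℂ] M) ≃ₗ[ℂ] (A ⊗[ℂ] M) :=
  TensorProduct.congr (LinearEquiv.refl ℂ A) T

end MU

universe u

/-- A (strict) Hilbert space tensor category, encoded concretely: objects are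
ℂ-modules equipped with an extra structure `S`, arrows are the linear maps
satisfying the predicate `IsHom`, the monoidal structure is induced by the tensor
product of the underlying spaces (so the forgetful functor is strict monoidal), and
`triv` is the strict monoidal section `τ` equipping a space with the trivial
structure (every linear map is an arrow between trivial objects). -/
structure HSTC : Type (u + 1) where
  /-- the extra structure making a ℂ-module into an object of the category -/
  S : ∀ (X : Type u) [AddCommGroup X] [Module ℂ X], Type u
  /-- the arrows of the category, as a predicate on linear maps -/
  IsHom : ∀ {X Y : Type u} [AddCommGroup X] [Module ℂ X] [AddCommGroup Y] [Module ℂ Y],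
    S X → S Y → (X →ₗ[ℂ] Y) → Prop
  isHom_id : ∀ {X : Type u} [AddCommGroup X] [Module ℂ X] (s : S X),
    IsHom s s LinearMap.id
  isHom_comp : ∀ {X Y Z : Type u} [AddCommGroup X] [Module ℂ X] [AddCommGroup Y]
    [Module ℂ Y] [AddCommGroup Z] [Module ℂ Z] (s : S X) (t : S Y) (u : S Z)
    (f : X →ₗ[ℂ] Y) (g : Y →ₗ[ℂ] Z), IsHom s t f → IsHom t u g → IsHom s u (g ∘ₗ f)
  /-- the tensor product of objects -/
  tenS : ∀ {X Y : Type u} [AddCommGroup X] [Module ℂ X] [AddCommGroup Y] [Module ℂ Y],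
    S X → S Y → S (X ⊗[ℂ] Y)
  /-- the trivial structure: the strict monoidal functor `τ : Hilb → C` -/
  triv : ∀ (X : Type u) [AddCommGroup X] [Module ℂ X], S X
  /-- every bounded linear map is an arrow between trivial objects -/
  triv_isHom : ∀ {X Y : Type u} [AddCommGroup X] [Module ℂ X] [AddCommGroup Y]
    [Module ℂ Y] (f : X →ₗ[ℂ] Y), IsHom (triv X) (triv Y) f
  /-- the tensor product of arrows is an arrow -/
  ten_isHom : ∀ {X X' Y Y' : Type u} [AddCommGroup X] [Module ℂ X] [AddCommGroup X']
    [Module ℂ X'] [AddCommGroup Y] [Module ℂ Y] [AddCommGroup Y'] [Module ℂ Y']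
    (s : S X) (s' : S X') (t : S Y) (t' : S Y') (f : X →ₗ[ℂ] X') (g : Y →ₗ[ℂ] Y'),
    IsHom s s' f → IsHom t t' g → IsHom (tenS s t) (tenS s' t') (TensorProduct.map f g)
  /-- `τ` is a strict tensor functor -/
  triv_tenS : ∀ (X Y : Type u) [AddCommGroup X] [Module ℂ X] [AddCommGroup Y]
    [Module ℂ Y], tenS (triv X) (triv Y) = triv (X ⊗[ℂ] Y)
  /-- the associators of the category are mapped to the canonical ones -/
  assoc_isHom : ∀ {X Y Z : Type u} [AddCommGroup X] [Module ℂ X] [AddCommGroup Y]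
    [Module ℂ Y] [AddCommGroup Z] [Module ℂ Z] (s : S X) (t : S Y) (u : S Z),
    IsHom (tenS (tenS s t) u) (tenS s (tenS t u))
      (TensorProduct.assoc ℂ X Y Z).toLinearMap
  assoc_symm_isHom : ∀ {X Y Z : Type u} [AddCommGroup X] [Module ℂ X] [AddCommGroup Y]
    [Module ℂ Y] [AddCommGroup Z] [Module ℂ Z] (s : S X) (t : S Y) (u : S Z),
    IsHom (tenS s (tenS t u)) (tenS (tenS s t) u)
      ((TensorProduct.assoc ℂ X Y Z).symm : X ⊗[ℂ] (Y ⊗[ℂ] Z) →ₗ[ℂ] (X ⊗[ℂ] Y) ⊗[ℂ] Z)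
  /-- the flip over a trivial object comes from an arrow (Lemma 2.5 of the paper) -/
  flip_triv_isHom : ∀ {X Y : Type u} [AddCommGroup X] [Module ℂ X] [AddCommGroup Y]
    [Module ℂ Y] (s : S X),
    IsHom (tenS s (triv Y)) (tenS (triv Y) s) (TensorProduct.comm ℂ X Y).toLinearMap

/-- A natural right absorber `(ρ, (Uˣ)ₓ)` in a Hilbert space tensor category `C`:
unitaries `Uˣ : x ⊗ ρ → τ(x) ⊗ ρ` (described on the underlying spaces, where both
objects have underlying space `X ⊗ R`), natural in `x`, and multiplicative:
`U^{x₁ ⊗ x₂} = U^{x₁}₁₃ U^{x₂}₂₃`. -/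
structure NRA (C : HSTC.{u}) (R : Type u) [AddCommGroup R] [Module ℂ R] where
  /-- the structure of the absorbing object `ρ` on the space `R` -/
  sρ : C.S R
  /-- the absorbing unitaries `Uˣ`, at the level of the underlying spaces -/
  U : ∀ (X : Type u) [AddCommGroup X] [Module ℂ X], C.S X →
    ((X ⊗[ℂ] R) ≃ₗ[ℂ] (X ⊗[ℂ] R))
  /-- each `Uˣ` is an arrow `x ⊗ ρ → τ(x) ⊗ ρ` in `C` -/
  U_isHom : ∀ (X : Type u) [AddCommGroup X] [Module ℂ X] (s : C.S X),
    C.IsHom (C.tenS s sρ) (C.tenS (C.triv X) sρ) (U X s).toLinearMap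
  /-- naturality of the `Uˣ` -/
  U_natural : ∀ {X Y : Type u} [AddCommGroup X] [Module ℂ X] [AddCommGroup Y]
    [Module ℂ Y] (s : C.S X) (t : C.S Y) (a : X →ₗ[ℂ] Y), C.IsHom s t a →
    TensorProduct.map a LinearMap.id ∘ₗ (U X s).toLinearMap
      = (U Y t).toLinearMap ∘ₗ TensorProduct.map a LinearMap.id
  /-- multiplicativity: `U^{x₁ ⊗ x₂} = U^{x₁}₁₃ U^{x₂}₂₃` -/
  U_mult : ∀ (X Y : Type u) [AddCommGroup X] [Module ℂ X] [AddCommGroup Y]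
    [Module ℂ Y] (s : C.S X) (t : C.S Y),
    U (X ⊗[ℂ] Y) (C.tenS s t)
      = TensorProduct.assoc ℂ X Y R ≪≫ₗ MU.extL (U Y t) ≪≫ₗ MU.stepMid (U X s) ≪≫ₗ
          (TensorProduct.assoc ℂ X Y R).symm

/-!
Naturality of `U` along the maps `ℂ → X, 1 ↦ ξ` shows that on trivial objects
`U^{τ X} = 1 ⊗ m` for the single operator `m := U^{τ ℂ}` on `ℂ ⊗ R = R`; multiplicativity at
`τ ℂ ⊗ τ ℂ` makes `m` idempotent, and being invertible it is the identity. Hence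
`U^{τ x ⊗ ρ} = U^ρ₂₃` and `U^{x ⊗ ρ} = U^x₁₃ U^ρ₂₃`, so that naturality of `U` along the arrow
`U^x : x ⊗ ρ → τ x ⊗ ρ` reads `U^x₁₂ U^x₁₃ U^ρ₂₃ = U^ρ₂₃ U^x₁₂`.
-/

open MU TensorProduct

theorem LinearEquiv.symm_trans_trans_mul {S M N : Type*} [Semiring S] [AddCommMonoid M]
    [Module S M] [AddCommMonoid N] [Module S N] (e : M ≃ₗ[S] N) (P Q : M ≃ₗ[S] M) :
    (e.symm ≪≫ₗ P ≪≫ₗ e) * (e.symm ≪≫ₗ Q ≪≫ₗ e) = e.symm ≪≫ₗ (P * Q) ≪≫ₗ e := by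
  ext; simp

theorem TensorProduct.tmul_right_injective_of_apply_eq_one {K X Y : Type*} [CommSemiring K]
    [AddCommMonoid X] [Module K X] [AddCommMonoid Y] [Module K Y] {ξ : X} (f : X →ₗ[K] K)
    (hf : f ξ = 1) : Function.Injective (ξ ⊗ₜ[K] · : Y → X ⊗[K] Y) := by
  intro a b hab
  simpa [hf] using congrArg ((TensorProduct.lid K Y).toLinearMap ∘ₗ f.rTensor Y) hab

namespace TensorProduct

variable (S M : Type*) [CommSemiring S] [AddCommMonoid M] [Module S M]

def uliftLid : ULift.{u} S ⊗[S] M ≃ₗ[S] M :=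
  congr ULift.moduleEquiv (.refl S M) ≪≫ₗ TensorProduct.lid S M

variable {S M}

@[simp]
theorem uliftLid_tmul (c : ULift.{u} S) (m : M) : uliftLid S M (c ⊗ₜ m) = c.down • m := by
  simp [uliftLid]

@[simp]
theorem uliftLid_symm_apply (m : M) : (uliftLid.{u} S M).symm m = ULift.up 1 ⊗ₜ m := by
  simp [uliftLid]

end TensorProduct

namespace MU

variable {A B M : Type*} [AddCommMonoid A] [Module ℂ A] [AddCommMonoid B] [Module ℂ B]
  [AddCommMonoid M] [Module ℂ M]

@[simp]
theorem exch_tmul (a : A) (b : B) (m : M) : exch (a ⊗ₜ[ℂ] (b ⊗ₜ[ℂ] m)) = b ⊗ₜ (a ⊗ₜ m) := by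
  simp [exch]

@[simp]
theorem extL_tmul (T : M ≃ₗ[ℂ] M) (a : A) (m : M) : extL T (a ⊗ₜ[ℂ] m) = a ⊗ₜ T m := by
  simp [extL]

@[simp]
theorem stepMid_refl : (stepMid (.refl ℂ (A ⊗[ℂ] M)) : A ⊗[ℂ] (B ⊗[ℂ] M) ≃ₗ[ℂ] _) = .refl ℂ _ := by
  apply LinearEquiv.toLinearMap_injective
  ext a b m
  simp [stepMid]

end MU

namespace NRA

variable {C : HSTC.{u}} {R : Type u} [AddCommGroup R] [Module ℂ R] (A : NRA C R)
  {X Y : Type u} [AddCommGroup X] [Module ℂ X] [AddCommGroup Y] [Module ℂ Y]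

theorem U_natural_equiv {s : C.S X} {t : C.S Y} {e : X ≃ₗ[ℂ] Y} (he : C.IsHom s t e) :
    A.U X s ≪≫ₗ congr e (.refl ℂ R) = congr e (.refl ℂ R) ≪≫ₗ A.U Y t :=
  LinearEquiv.toLinearMap_injective (A.U_natural s t e he)

theorem assoc_conj_U_tenS (s : C.S X) (t : C.S Y) :
    (TensorProduct.assoc ℂ X Y R).symm ≪≫ₗ A.U (X ⊗[ℂ] Y) (C.tenS s t) ≪≫ₗ
        TensorProduct.assoc ℂ X Y R = stepMid (A.U X s) * extL (A.U Y t) := by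
  ext; simp [A.U_mult, LinearEquiv.mul_apply]

def unitU : R ≃ₗ[ℂ] R :=
  (uliftLid ℂ R).symm ≪≫ₗ A.U _ (C.triv _) ≪≫ₗ uliftLid ℂ R

theorem U_unit_tmul (r : R) :
    A.U _ (C.triv _) (ULift.up 1 ⊗ₜ r) = ULift.up.{u} (1 : ℂ) ⊗ₜ A.unitU r := by
  apply (uliftLid ℂ R).injective
  simp [unitU]

theorem U_triv_tmul (ξ : X) (r : R) : A.U X (C.triv X) (ξ ⊗ₜ r) = ξ ⊗ₜ A.unitU r := by
  let a : ULift.{u} ℂ →ₗ[ℂ] X := LinearMap.toSpanSingleton ℂ X ξ ∘ₗ ULift.moduleEquiv.toLinearMap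
  have := congr($(A.U_natural _ _ a (C.triv_isHom a)) (ULift.up 1 ⊗ₜ r))
  simpa [a, U_unit_tmul] using this.symm

theorem U_triv_eq_extL_unitU : A.U X (C.triv X) = extL A.unitU := by
  apply LinearEquiv.toLinearMap_injective
  ext ξ r
  simp [U_triv_tmul]

theorem unitU_mul_self : A.unitU * A.unitU = A.unitU := by
  have hmult := A.U_mult (ULift.{u} ℂ) (ULift.{u} ℂ) (C.triv _) (C.triv _)
  rw [C.triv_tenS] at hmult
  ext r
  have h := congr($hmult ((ULift.up 1 ⊗ₜ ULift.up 1) ⊗ₜ r))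
  simp only [U_triv_tmul, stepMid, LinearEquiv.trans_apply, assoc_tmul, extL_tmul, exch_tmul,
    congr_tmul, LinearEquiv.refl_apply, assoc_symm_tmul] at h
  let φ := (uliftLid ℂ (ULift.{u} ℂ) ≪≫ₗ ULift.moduleEquiv).toLinearMap
  exact (tmul_right_injective_of_apply_eq_one φ (by simp [φ]) h).symm

theorem unitU_eq_one : A.unitU = 1 :=
  mul_right_cancel (A.unitU_mul_self.trans (one_mul _).symm)

@[simp]
theorem U_triv : A.U X (C.triv X) = .refl ℂ _ := by
  rw [U_triv_eq_extL_unitU, unitU_eq_one]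
  exact congr_refl_refl

theorem endTail_mul_stepMid_mul_extL (s : C.S X) :
    endTail (A.U X s) * stepMid (A.U X s) * extL (A.U R A.sρ)
      = extL (A.U R A.sρ) * endTail (A.U X s) := by
  set α := TensorProduct.assoc ℂ X R R
  have hx := A.assoc_conj_U_tenS s A.sρ
  have hτx : α.symm ≪≫ₗ A.U _ (C.tenS (C.triv X) A.sρ) ≪≫ₗ α = extL (A.U R A.sρ) := by
    rw [assoc_conj_U_tenS, U_triv, stepMid_refl]
    exact one_mul _
  have hnat := A.U_natural_equiv (A.U_isHom X s)
  rw [mul_assoc, ← hx, ← hτx, endTail, LinearEquiv.symm_trans_trans_mul,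
    LinearEquiv.symm_trans_trans_mul, LinearEquiv.mul_eq_trans, LinearEquiv.mul_eq_trans, hnat]

end NRA

open MU in
/-- for a natural right absorber `(ρ, U)` in a Hilbert space tensor
category, every `Uˣ` satisfies `Uˣ₁₂ Uˣ₁₃ Uᵖ₂₃ = Uᵖ₂₃ Uˣ₁₂` on `Hˣ ⊗ Hᵖ ⊗ Hᵖ`;
in particular (`x = ρ`) the unitary `Uᵖ` satisfies the pentagon equation, hence is a
multiplicative unitary, and each `Uˣ` is a right representation of it. -/
theorem absorber_gives_multiplicative_unitary
    (C : HSTC.{u}) {R : Type u} [AddCommGroup R] [Module ℂ R] (A : NRA C R)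
    (X : Type u) [AddCommGroup X] [Module ℂ X] (s : C.S X) :
    (endTail (A.U X s) * stepMid (A.U X s) * extL (A.U R A.sρ)
        = extL (A.U R A.sρ) * endTail (A.U X s))
      ∧ (endTail (A.U R A.sρ) * stepMid (A.U R A.sρ) * extL (A.U R A.sρ)
        = extL (A.U R A.sρ) * endTail (A.U R A.sρ)) :=
  ⟨A.endTail_mul_stepMid_mul_extL s, A.endTail_mul_stepMid_mul_extL A.sρ⟩
end
end

section
/- Let (ρ, U) be a natural right absorber in C and y an object of C. Then ρ⊗y together with the unitaries U^x ⊗ id_y is again a natural right absorber, and its associated multiplicative unitary on (H^ρ⊗H^y)⊗(H^ρ⊗H^y) equals U^ρ₁₃ U^y₂₃ (legs numbered in H^ρ⊗H^y⊗H^ρ⊗H^y). -/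
noncomputable section
open scoped TensorProduct

universe u

/-!
Tensoring with `id_y` commutes with the leg notation: `(T₂₃) ⊗ id_y = (T ⊗ id_y)₂₃` and
`(T₁₃) ⊗ id_y = (T ⊗ id_y)₁₃`. Hence the multiplicativity `U^{x₁ ⊗ x₂} = U^{x₁}₁₃ U^{x₂}₂₃`
passes to `Ǔˣ = Uˣ ⊗ id_y`, and the formula for `Ǔ^{ρ ⊗ y}` is its instance `x₁ = ρ`, `x₂ = y`.
Being an arrow and naturality survive tensoring with `id_y` because `C` is monoidal.
-/

namespace MU

open TensorProduct

variable {A A' B M R Y : Type*}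
  [AddCommMonoid A] [Module ℂ A] [AddCommMonoid A'] [Module ℂ A'] [AddCommMonoid B] [Module ℂ B]
  [AddCommMonoid M] [Module ℂ M] [AddCommMonoid R] [Module ℂ R] [AddCommMonoid Y] [Module ℂ Y]

def leg23 (T : (B ⊗[ℂ] M) ≃ₗ[ℂ] (B ⊗[ℂ] M)) :
    ((A ⊗[ℂ] B) ⊗[ℂ] M) ≃ₗ[ℂ] ((A ⊗[ℂ] B) ⊗[ℂ] M) :=
  TensorProduct.assoc ℂ A B M ≪≫ₗ extL T ≪≫ₗ (TensorProduct.assoc ℂ A B M).symm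

def leg13 (T : (A ⊗[ℂ] M) ≃ₗ[ℂ] (A ⊗[ℂ] M)) :
    ((A ⊗[ℂ] B) ⊗[ℂ] M) ≃ₗ[ℂ] ((A ⊗[ℂ] B) ⊗[ℂ] M) :=
  TensorProduct.assoc ℂ A B M ≪≫ₗ stepMid T ≪≫ₗ (TensorProduct.assoc ℂ A B M).symm

theorem assoc_trans_extL_trans_stepMid (T : (B ⊗[ℂ] M) ≃ₗ[ℂ] (B ⊗[ℂ] M))
    (T' : (A ⊗[ℂ] M) ≃ₗ[ℂ] (A ⊗[ℂ] M)) :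
    TensorProduct.assoc ℂ A B M ≪≫ₗ extL T ≪≫ₗ stepMid T' ≪≫ₗ (TensorProduct.assoc ℂ A B M).symm
      = leg23 T ≪≫ₗ leg13 T' := by
  ext; simp [leg23, leg13]

theorem endTail_toLinearMap (T : (A ⊗[ℂ] B) ≃ₗ[ℂ] (A ⊗[ℂ] B)) :
    (endTail (R := R) T).toLinearMap =
      (TensorProduct.assoc ℂ A B R).toLinearMap ∘ₗ map T.toLinearMap LinearMap.id ∘ₗ
        (TensorProduct.assoc ℂ A B R).symm.toLinearMap := rfl

theorem endTail_trans (T T' : (A ⊗[ℂ] B) ≃ₗ[ℂ] (A ⊗[ℂ] B)) :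
    endTail (R := R) (T ≪≫ₗ T') = endTail T ≪≫ₗ endTail T' := by
  rw [endTail, ← (LinearEquiv.refl ℂ R).trans_refl, congr_trans]
  ext; simp [endTail]

theorem endTail_leg23 (T : (B ⊗[ℂ] M) ≃ₗ[ℂ] (B ⊗[ℂ] M)) :
    endTail (R := Y) (leg23 (A := A) T) = leg23 (endTail T) := by
  apply LinearEquiv.toLinearMap_injective
  refine ext_fourfold' fun a b m y => ?_
  simp only [endTail, leg23, extL, LinearEquiv.coe_coe, LinearEquiv.trans_apply,
    assoc_symm_tmul, congr_tmul, assoc_tmul, LinearEquiv.refl_apply]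
  induction T (b ⊗ₜ m) using TensorProduct.induction_on with
  | zero => simp
  | tmul b' m' => simp
  | add p q hp hq => simp only [tmul_add, add_tmul, map_add, hp, hq]

theorem endTail_leg13 (T : (A ⊗[ℂ] M) ≃ₗ[ℂ] (A ⊗[ℂ] M)) :
    endTail (R := Y) (leg13 (B := B) T) = leg13 (endTail T) := by
  apply LinearEquiv.toLinearMap_injective
  refine ext_fourfold' fun a b m y => ?_
  simp only [endTail, leg13, stepMid, exch, LinearEquiv.coe_coe, LinearEquiv.trans_apply,
    assoc_symm_tmul, congr_tmul, assoc_tmul, comm_tmul, LinearEquiv.refl_apply,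
    LinearEquiv.symm_apply_apply]
  induction T (a ⊗ₜ m) using TensorProduct.induction_on with
  | zero => simp
  | tmul a' m' => simp
  | add p q hp hq => simp only [tmul_add, add_tmul, map_add, hp, hq]

theorem endTail_assoc_trans_extL_trans_stepMid (T : (B ⊗[ℂ] M) ≃ₗ[ℂ] (B ⊗[ℂ] M))
    (T' : (A ⊗[ℂ] M) ≃ₗ[ℂ] (A ⊗[ℂ] M)) :
    endTail (R := Y) (TensorProduct.assoc ℂ A B M ≪≫ₗ extL T ≪≫ₗ stepMid T' ≪≫ₗ
        (TensorProduct.assoc ℂ A B M).symm)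
      = TensorProduct.assoc ℂ A B (M ⊗[ℂ] Y) ≪≫ₗ extL (endTail T) ≪≫ₗ stepMid (endTail T') ≪≫ₗ
          (TensorProduct.assoc ℂ A B (M ⊗[ℂ] Y)).symm := by
  rw [assoc_trans_extL_trans_stepMid, assoc_trans_extL_trans_stepMid, endTail_trans,
    endTail_leg23, endTail_leg13]

theorem map_comp_endTail (a : A →ₗ[ℂ] A') (T : (A ⊗[ℂ] B) ≃ₗ[ℂ] (A ⊗[ℂ] B))
    (T' : (A' ⊗[ℂ] B) ≃ₗ[ℂ] (A' ⊗[ℂ] B))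
    (h : map a LinearMap.id ∘ₗ T.toLinearMap = T'.toLinearMap ∘ₗ map a LinearMap.id) :
    map a (LinearMap.id (M := B ⊗[ℂ] R)) ∘ₗ (endTail T).toLinearMap
      = (endTail T').toLinearMap ∘ₗ map a LinearMap.id := by
  have h' (w : A ⊗[ℂ] B) : map a LinearMap.id (T w) = T' (map a LinearMap.id w) :=
    LinearMap.congr_fun h w
  refine ext_threefold' fun x b r => ?_
  simp [endTail, ← map_id, map_map_assoc, h']

end MU

theorem HSTC.isHom_endTail (C : HSTC.{u}) {X R Y : Type u}
    [AddCommGroup X] [Module ℂ X] [AddCommGroup R] [Module ℂ R] [AddCommGroup Y] [Module ℂ Y]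
    {s s' : C.S X} {r : C.S R} (t : C.S Y) {T : (X ⊗[ℂ] R) ≃ₗ[ℂ] (X ⊗[ℂ] R)}
    (hT : C.IsHom (C.tenS s r) (C.tenS s' r) T.toLinearMap) :
    C.IsHom (C.tenS s (C.tenS r t)) (C.tenS s' (C.tenS r t)) (MU.endTail T).toLinearMap := by
  rw [MU.endTail_toLinearMap]
  exact C.isHom_comp _ _ _ _ _
    (C.isHom_comp _ _ _ _ _ (C.assoc_symm_isHom s r t) (C.ten_isHom _ _ _ _ _ _ hT (C.isHom_id t)))
    (C.assoc_isHom s' r t)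

open MU in
/-- if `(ρ, U)` is a natural right absorber in `C` and `y = (Y, t)` is an
object of `C`, then `ρ ⊗ y` together with the unitaries `Ǔˣ := Uˣ ⊗ id_y` is again a
natural right absorber (each `Ǔˣ` is an arrow, natural, multiplicative), and the
multiplicative unitary associated to it equals `Uᵖ₁₃ U^y₂₃` on
`(Hᵖ ⊗ H^y) ⊗ (Hᵖ ⊗ H^y)`. -/
theorem absorber_tensor_object
    (C : HSTC.{u}) {R Y : Type u}
    [AddCommGroup R] [Module ℂ R] [AddCommGroup Y] [Module ℂ Y]
    (A : NRA C R) (t : C.S Y) :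
    -- the candidate family `Ǔˣ = Uˣ ⊗ id_Y`, as an operator on `X ⊗ (R ⊗ Y)`,
    -- is `endTail (A.U X s)`; it is a natural right absorber for `ρ ⊗ y`:
    -- (1) each `Ǔˣ` is an arrow `x ⊗ (ρ ⊗ y) → τ(x) ⊗ (ρ ⊗ y)` in `C`
    (∀ (X : Type u) [AddCommGroup X] [Module ℂ X] (s : C.S X),
      C.IsHom (C.tenS s (C.tenS A.sρ t)) (C.tenS (C.triv X) (C.tenS A.sρ t))
        (endTail (A.U X s)).toLinearMap)
    -- (2) naturality
    ∧ (∀ (X X' : Type u) [AddCommGroup X] [Module ℂ X] [AddCommGroup X'] [Module ℂ X']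
        (s : C.S X) (s' : C.S X') (a : X →ₗ[ℂ] X'), C.IsHom s s' a →
        TensorProduct.map a (LinearMap.id (R := ℂ) (M := R ⊗[ℂ] Y)) ∘ₗ
            (endTail (A.U X s)).toLinearMap
          = (endTail (A.U X' s')).toLinearMap ∘ₗ
              TensorProduct.map a (LinearMap.id (R := ℂ) (M := R ⊗[ℂ] Y)))
    -- (3) multiplicativity
    ∧ (∀ (X X' : Type u) [AddCommGroup X] [Module ℂ X] [AddCommGroup X'] [Module ℂ X']
        (s : C.S X) (s' : C.S X'),
        endTail (A.U (X ⊗[ℂ] X') (C.tenS s s'))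
          = TensorProduct.assoc ℂ X X' (R ⊗[ℂ] Y) ≪≫ₗ extL (endTail (A.U X' s'))
              ≪≫ₗ stepMid (endTail (A.U X s))
              ≪≫ₗ (TensorProduct.assoc ℂ X X' (R ⊗[ℂ] Y)).symm)
    -- (4) the associated multiplicative unitary is `Uᵖ₁₃ U^y₂₃`
    ∧ (endTail (A.U (R ⊗[ℂ] Y) (C.tenS A.sρ t))
        = TensorProduct.assoc ℂ R Y (R ⊗[ℂ] Y) ≪≫ₗ extL (endTail (A.U Y t))
            ≪≫ₗ stepMid (endTail (A.U R A.sρ))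
            ≪≫ₗ (TensorProduct.assoc ℂ R Y (R ⊗[ℂ] Y)).symm) := by
  refine ⟨fun X _ _ s => C.isHom_endTail t (A.U_isHom X s),
    fun X X' _ _ _ _ s s' a ha => map_comp_endTail a _ _ (A.U_natural s s' a ha),
    fun X X' _ _ _ _ s s' => ?_, ?_⟩ <;>
  rw [A.U_mult, endTail_assoc_trans_extL_trans_stepMid]
end
end

section
/- Let W ∈ U(H⊗H) be a multiplicative unitary and U ∈ U(K⊗H) a right representation. Then the unitary M := W₁₃U₂₃ ∈ U((H⊗K)⊗(H⊗K)), with legs H, K, H, K and acting trivially on the fourth leg, is itself a multiplicative unitary, i.e. M₃₄₅₆M₁₂₃₄ = M₁₂₃₄M₁₂₅₆M₃₄₅₆ on (H⊗K)^{⊗3}. -/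
noncomputable section
open scoped TensorProduct

namespace MU

variable {H K K' : Type*}
  [AddCommMonoid H] [Module ℂ H] [AddCommMonoid K] [Module ℂ K]
  [AddCommMonoid K'] [Module ℂ K']

/-- The pentagon equation `W₂₃ W₁₂ = W₁₂ W₁₃ W₂₃` on `H ⊗ H ⊗ H`:
`W` is a multiplicative unitary. -/
def IsMultiplicative (W : (H ⊗[ℂ] H) ≃ₗ[ℂ] (H ⊗[ℂ] H)) : Prop :=
  extL W * endTail W = endTail W * stepMid W * extL W

/-- `U ∈ U(K ⊗ H)` is a right representation of `W`:
`W₂₃ U₁₂ = U₁₂ U₁₃ W₂₃` on `K ⊗ H ⊗ H`. -/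
def IsRightRep (W : (H ⊗[ℂ] H) ≃ₗ[ℂ] (H ⊗[ℂ] H))
    (U : (K ⊗[ℂ] H) ≃ₗ[ℂ] (K ⊗[ℂ] H)) : Prop :=
  extL W * endTail U = endTail U * stepMid U * extL W

/-- `V ∈ U(H ⊗ K)` is a left representation of `W`:
`V₂₃ W₁₂ = W₁₂ V₁₃ V₂₃` on `H ⊗ H ⊗ K`. -/
def IsLeftRep (W : (H ⊗[ℂ] H) ≃ₗ[ℂ] (H ⊗[ℂ] H))
    (V : (H ⊗[ℂ] K) ≃ₗ[ℂ] (H ⊗[ℂ] K)) : Prop :=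
  extL V * endTail W = endTail W * stepMid V * extL V

/-- The tensor product `U ⊠ U' := U₁₃ U'₂₃` of two right representations,
as an operator on `(K ⊗ K') ⊗ H`. -/
def prodRep (U : (K ⊗[ℂ] H) ≃ₗ[ℂ] (K ⊗[ℂ] H))
    (U' : (K' ⊗[ℂ] H) ≃ₗ[ℂ] (K' ⊗[ℂ] H)) :
    ((K ⊗[ℂ] K') ⊗[ℂ] H) ≃ₗ[ℂ] ((K ⊗[ℂ] K') ⊗[ℂ] H) :=
  TensorProduct.assoc ℂ K K' H ≪≫ₗ extL U' ≪≫ₗ stepMid U ≪≫ₗ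
    (TensorProduct.assoc ℂ K K' H).symm

end MU

namespace MU

variable {H K : Type*} [AddCommMonoid H] [Module ℂ H] [AddCommMonoid K] [Module ℂ K]

/-- The semidirect-product type operator `M := W₁₃ U₂₃` on `(H ⊗ K) ⊗ (H ⊗ K)`,
acting trivially on the last leg. -/
def pairOp (W : (H ⊗[ℂ] H) ≃ₗ[ℂ] (H ⊗[ℂ] H))
    (U : (K ⊗[ℂ] H) ≃ₗ[ℂ] (K ⊗[ℂ] H)) :
    ((H ⊗[ℂ] K) ⊗[ℂ] (H ⊗[ℂ] K)) ≃ₗ[ℂ] ((H ⊗[ℂ] K) ⊗[ℂ] (H ⊗[ℂ] K)) :=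
  TensorProduct.assoc ℂ H K (H ⊗[ℂ] K) ≪≫ₗ extL (endTail U) ≪≫ₗ
    stepMid (endTail W) ≪≫ₗ (TensorProduct.assoc ℂ H K (H ⊗[ℂ] K)).symm

end MU

namespace MU

section Generic

variable {A B M R α β : Type*}
  [AddCommMonoid A] [Module ℂ A] [AddCommMonoid B] [Module ℂ B]
  [AddCommMonoid M] [Module ℂ M] [AddCommMonoid R] [Module ℂ R]
  [AddCommMonoid α] [Module ℂ α] [AddCommMonoid β] [Module ℂ β]

@[simp] lemma mul_apply' (f g : M ≃ₗ[ℂ] M) (x : M) : (f * g) x = f (g x) := rfl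

@[simp] lemma extL_apply (T : M ≃ₗ[ℂ] M) (a : A) (m : M) :
    (extL T) (a ⊗ₜ[ℂ] m) = a ⊗ₜ[ℂ] T m := rfl

@[simp] lemma exch_apply (a : A) (b : B) (m : M) :
    (exch (M := M)) (a ⊗ₜ[ℂ] (b ⊗ₜ[ℂ] m)) = b ⊗ₜ[ℂ] (a ⊗ₜ[ℂ] m) := by
  simp [exch]

@[simp] lemma endTail_apply (T : (A ⊗[ℂ] B) ≃ₗ[ℂ] (A ⊗[ℂ] B)) (a : A) (b : B) (r : R) :
    (endTail T) (a ⊗ₜ[ℂ] (b ⊗ₜ[ℂ] r)) = (TensorProduct.assoc ℂ A B R) (T (a ⊗ₜ b) ⊗ₜ r) := by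
  simp [endTail]

@[simp] lemma stepMid_apply (T : (A ⊗[ℂ] M) ≃ₗ[ℂ] (A ⊗[ℂ] M)) (a : A) (b : B) (m : M) :
    (stepMid T) (a ⊗ₜ[ℂ] (b ⊗ₜ[ℂ] m)) = (exch (M := M)) (b ⊗ₜ[ℂ] T (a ⊗ₜ m)) := by
  simp [stepMid]

/-- An endomorphism of `A` acting on the first factor of `A ⊗ M`. -/
def fstL (T : A ≃ₗ[ℂ] A) : (A ⊗[ℂ] M) ≃ₗ[ℂ] (A ⊗[ℂ] M) :=
  TensorProduct.congr T (LinearEquiv.refl ℂ M)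

@[simp] lemma fstL_apply (T : A ≃ₗ[ℂ] A) (a : A) (m : M) :
    (fstL T) (a ⊗ₜ[ℂ] m) = T a ⊗ₜ[ℂ] m := rfl

lemma fstL_mul (S T : A ≃ₗ[ℂ] A) : (fstL (M := M) (S * T)) = fstL S * fstL T := by
  apply LinearEquiv.toLinearMap_injective; ext a m
  simp

lemma fstL_extL_comm (S : A ≃ₗ[ℂ] A) (T : M ≃ₗ[ℂ] M) :
    fstL S * extL T = extL T * fstL (M := M) S := by
  apply LinearEquiv.toLinearMap_injective; ext a m
  simp

/-- Conjugation of an endomorphism of `β` by an equivalence `α ≃ β`. -/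
def conj (E : α ≃ₗ[ℂ] β) (T : β ≃ₗ[ℂ] β) : α ≃ₗ[ℂ] α :=
  E ≪≫ₗ T ≪≫ₗ E.symm

@[simp] lemma conj_apply (E : α ≃ₗ[ℂ] β) (T : β ≃ₗ[ℂ] β) (x : α) :
    conj E T x = E.symm (T (E x)) := rfl

lemma conj_mul (E : α ≃ₗ[ℂ] β) (S T : β ≃ₗ[ℂ] β) :
    conj E (S * T) = conj E S * conj E T := by
  apply LinearEquiv.toLinearMap_injective; ext x
  simp

lemma mul_swap_assoc {G : Type*} [Monoid G] {x y : G} (h : x * y = y * x) (z : G) :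
    x * (y * z) = y * (x * z) := by rw [← mul_assoc, h, mul_assoc]

lemma pent_assoc {G : Type*} [Monoid G] {x y p q r : G} (h : x * y = p * q * r) (z : G) :
    x * (y * z) = p * (q * (r * z)) := by rw [← mul_assoc, h, mul_assoc, mul_assoc]

end Generic

section Pair

variable {H K : Type*} [AddCommMonoid H] [Module ℂ H] [AddCommMonoid K] [Module ℂ K]
variable (W : (H ⊗[ℂ] H) ≃ₗ[ℂ] (H ⊗[ℂ] H)) (U : (K ⊗[ℂ] H) ≃ₗ[ℂ] (K ⊗[ℂ] H))

/-- `W₁₃` on `(H ⊗ K) ⊗ (H ⊗ K)`. -/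
def legA : ((H ⊗[ℂ] K) ⊗[ℂ] (H ⊗[ℂ] K)) ≃ₗ[ℂ] ((H ⊗[ℂ] K) ⊗[ℂ] (H ⊗[ℂ] K)) :=
  TensorProduct.assoc ℂ H K (H ⊗[ℂ] K) ≪≫ₗ stepMid (endTail W) ≪≫ₗ
    (TensorProduct.assoc ℂ H K (H ⊗[ℂ] K)).symm

/-- `U₂₃` on `(H ⊗ K) ⊗ (H ⊗ K)`. -/
def legB : ((H ⊗[ℂ] K) ⊗[ℂ] (H ⊗[ℂ] K)) ≃ₗ[ℂ] ((H ⊗[ℂ] K) ⊗[ℂ] (H ⊗[ℂ] K)) :=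
  TensorProduct.assoc ℂ H K (H ⊗[ℂ] K) ≪≫ₗ extL (endTail U) ≪≫ₗ
    (TensorProduct.assoc ℂ H K (H ⊗[ℂ] K)).symm

lemma pairOp_eq : pairOp W U = legA W * legB U := by
  apply LinearEquiv.toLinearMap_injective; ext x y
  simp [pairOp, legA, legB]

local notation "X" => H ⊗[ℂ] K

/-- Shuffle sorting the legs `H K H K H K` of `X ⊗ (X ⊗ X)` as `(1 3 5)(2 4 6)`. -/
def shufPhi : (X ⊗[ℂ] (X ⊗[ℂ] X)) ≃ₗ[ℂ]
    ((H ⊗[ℂ] (H ⊗[ℂ] H)) ⊗[ℂ] (K ⊗[ℂ] (K ⊗[ℂ] K))) :=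
  TensorProduct.congr (LinearEquiv.refl ℂ X) (TensorProduct.tensorTensorTensorComm ℂ H K H K)
    ≪≫ₗ TensorProduct.tensorTensorTensorComm ℂ H K (H ⊗[ℂ] H) (K ⊗[ℂ] K)

/-- Shuffle sorting the legs as `(2 3 5)(1 4 6)`. -/
def shufPsi : (X ⊗[ℂ] (X ⊗[ℂ] X)) ≃ₗ[ℂ]
    ((K ⊗[ℂ] (H ⊗[ℂ] H)) ⊗[ℂ] (H ⊗[ℂ] (K ⊗[ℂ] K))) :=
  TensorProduct.congr (LinearEquiv.refl ℂ X) (TensorProduct.tensorTensorTensorComm ℂ H K H K)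
    ≪≫ₗ TensorProduct.congr (TensorProduct.comm ℂ H K)
      (LinearEquiv.refl ℂ ((H ⊗[ℂ] H) ⊗[ℂ] (K ⊗[ℂ] K)))
    ≪≫ₗ TensorProduct.tensorTensorTensorComm ℂ K H (H ⊗[ℂ] H) (K ⊗[ℂ] K)

/-- Shuffle grouping the legs as `(1 2 3)(4 5 6)`. -/
def shufTheta : (X ⊗[ℂ] (X ⊗[ℂ] X)) ≃ₗ[ℂ]
    ((H ⊗[ℂ] (K ⊗[ℂ] H)) ⊗[ℂ] (K ⊗[ℂ] (H ⊗[ℂ] K))) :=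
  TensorProduct.congr (LinearEquiv.refl ℂ X) (TensorProduct.assoc ℂ H K X)
    ≪≫ₗ (TensorProduct.assoc ℂ X H (K ⊗[ℂ] X)).symm
    ≪≫ₗ TensorProduct.congr (TensorProduct.assoc ℂ H K H) (LinearEquiv.refl ℂ (K ⊗[ℂ] X))

/-- Shuffle grouping the legs as `(1 5 6)(2 3 4)`. -/
def shufXi : (X ⊗[ℂ] (X ⊗[ℂ] X)) ≃ₗ[ℂ]
    ((H ⊗[ℂ] (H ⊗[ℂ] K)) ⊗[ℂ] (K ⊗[ℂ] (H ⊗[ℂ] K))) :=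
  TensorProduct.congr (LinearEquiv.refl ℂ X) (TensorProduct.comm ℂ X X)
    ≪≫ₗ TensorProduct.tensorTensorTensorComm ℂ H K X X

end Pair

end MU

namespace MU

section Mul

variable {A B M R : Type*}
  [AddCommMonoid A] [Module ℂ A] [AddCommMonoid B] [Module ℂ B]
  [AddCommMonoid M] [Module ℂ M] [AddCommMonoid R] [Module ℂ R]

lemma extL_mul (S T : M ≃ₗ[ℂ] M) : (extL (A := A) (S * T)) = extL S * extL T := by
  apply LinearEquiv.toLinearMap_injective; ext a m
  simp

lemma endTail_mul (S T : (A ⊗[ℂ] B) ≃ₗ[ℂ] (A ⊗[ℂ] B)) :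
    (endTail (R := R) (S * T)) = endTail S * endTail T := by
  apply LinearEquiv.toLinearMap_injective; ext a b r
  simp only [TensorProduct.AlgebraTensorModule.curry_apply, TensorProduct.curry_apply,
    LinearMap.coe_restrictScalars, LinearEquiv.coe_coe, mul_apply', endTail_apply]
  generalize T (a ⊗ₜ[ℂ] b) = z
  induction z using TensorProduct.induction_on with
  | zero => simp
  | tmul x y => simp
  | add x y hx hy => simp only [map_add, TensorProduct.tmul_add, TensorProduct.add_tmul, hx, hy]

lemma stepMid_mul (S T : (A ⊗[ℂ] M) ≃ₗ[ℂ] (A ⊗[ℂ] M)) :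
    (stepMid (B := B) (S * T)) = stepMid S * stepMid T := by
  apply LinearEquiv.toLinearMap_injective; ext a b m
  simp only [TensorProduct.AlgebraTensorModule.curry_apply, TensorProduct.curry_apply,
    LinearMap.coe_restrictScalars, LinearEquiv.coe_coe, mul_apply', stepMid_apply]
  generalize T (a ⊗ₜ[ℂ] m) = z
  induction z using TensorProduct.induction_on with
  | zero => simp
  | tmul x y => simp
  | add x y hx hy => simp only [map_add, TensorProduct.tmul_add, TensorProduct.add_tmul, hx, hy]

end Mul

section Conjugation

variable {H K : Type*} [AddCommMonoid H] [Module ℂ H] [AddCommMonoid K] [Module ℂ K]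
variable (W : (H ⊗[ℂ] H) ≃ₗ[ℂ] (H ⊗[ℂ] H)) (U : (K ⊗[ℂ] H) ≃ₗ[ℂ] (K ⊗[ℂ] H))

local notation "X" => H ⊗[ℂ] K

lemma cPhi_endTail :
    endTail (R := X) (legA W) = conj shufPhi (fstL (endTail W)) := by
  apply LinearEquiv.toLinearMap_injective
  ext h1 k2 h3 k4 h5 k6
  simp only [TensorProduct.AlgebraTensorModule.curry_apply, TensorProduct.curry_apply,
    LinearMap.coe_restrictScalars, LinearEquiv.coe_coe, conj_apply, shufPhi, legA,
    endTail_apply, stepMid_apply, fstL_apply, extL_apply, exch_apply,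
    LinearEquiv.trans_apply, TensorProduct.congr_tmul, LinearEquiv.refl_apply,
    TensorProduct.tensorTensorTensorComm_tmul, TensorProduct.assoc_tmul,
    TensorProduct.assoc_symm_tmul, TensorProduct.comm_tmul]
  generalize W (h1 ⊗ₜ[ℂ] h3) = w
  induction w using TensorProduct.induction_on with
  | zero => simp
  | tmul x y => simp
  | add x y hx hy => simp only [map_add, TensorProduct.tmul_add, TensorProduct.add_tmul, hx, hy]

lemma cPhi_stepMid :
    stepMid (B := X) (legA W) = conj shufPhi (fstL (stepMid W)) := by
  apply LinearEquiv.toLinearMap_injective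
  ext h1 k2 h3 k4 h5 k6
  simp only [TensorProduct.AlgebraTensorModule.curry_apply, TensorProduct.curry_apply,
    LinearMap.coe_restrictScalars, LinearEquiv.coe_coe, conj_apply, shufPhi, legA,
    endTail_apply, stepMid_apply, fstL_apply, extL_apply, exch_apply,
    LinearEquiv.trans_apply, TensorProduct.congr_tmul, LinearEquiv.refl_apply,
    TensorProduct.tensorTensorTensorComm_tmul, TensorProduct.assoc_tmul,
    TensorProduct.assoc_symm_tmul, TensorProduct.comm_tmul]
  generalize W (h1 ⊗ₜ[ℂ] h5) = w
  induction w using TensorProduct.induction_on with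
  | zero => simp
  | tmul x y => simp
  | add x y hx hy => simp only [map_add, TensorProduct.tmul_add, TensorProduct.add_tmul, hx, hy]

lemma cPhi_extL :
    extL (A := X) (legA W) = conj shufPhi (fstL (extL W)) := by
  apply LinearEquiv.toLinearMap_injective
  ext h1 k2 h3 k4 h5 k6
  simp only [TensorProduct.AlgebraTensorModule.curry_apply, TensorProduct.curry_apply,
    LinearMap.coe_restrictScalars, LinearEquiv.coe_coe, conj_apply, shufPhi, legA,
    endTail_apply, stepMid_apply, fstL_apply, extL_apply, exch_apply,
    LinearEquiv.trans_apply, TensorProduct.congr_tmul, LinearEquiv.refl_apply,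
    TensorProduct.tensorTensorTensorComm_tmul, TensorProduct.assoc_tmul,
    TensorProduct.assoc_symm_tmul, TensorProduct.comm_tmul]
  generalize W (h3 ⊗ₜ[ℂ] h5) = w
  induction w using TensorProduct.induction_on with
  | zero => simp
  | tmul x y => simp
  | add x y hx hy => simp only [map_add, TensorProduct.tmul_add, TensorProduct.add_tmul, hx, hy]

lemma cPsi_extL :
    extL (A := X) (legA W) = conj shufPsi (fstL (extL W)) := by
  apply LinearEquiv.toLinearMap_injective
  ext h1 k2 h3 k4 h5 k6
  simp only [TensorProduct.AlgebraTensorModule.curry_apply, TensorProduct.curry_apply,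
    LinearMap.coe_restrictScalars, LinearEquiv.coe_coe, conj_apply, shufPsi, legA,
    endTail_apply, stepMid_apply, fstL_apply, extL_apply, exch_apply,
    LinearEquiv.trans_apply, TensorProduct.congr_tmul, LinearEquiv.refl_apply,
    TensorProduct.tensorTensorTensorComm_tmul, TensorProduct.assoc_tmul,
    TensorProduct.assoc_symm_tmul, TensorProduct.comm_tmul]
  generalize W (h3 ⊗ₜ[ℂ] h5) = w
  induction w using TensorProduct.induction_on with
  | zero => simp
  | tmul x y => simp
  | add x y hx hy => simp only [map_add, TensorProduct.tmul_add, TensorProduct.add_tmul, hx, hy]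

lemma cPsi_endTail :
    endTail (R := X) (legB U) = conj shufPsi (fstL (endTail U)) := by
  apply LinearEquiv.toLinearMap_injective
  ext h1 k2 h3 k4 h5 k6
  simp only [TensorProduct.AlgebraTensorModule.curry_apply, TensorProduct.curry_apply,
    LinearMap.coe_restrictScalars, LinearEquiv.coe_coe, conj_apply, shufPsi, legB,
    endTail_apply, stepMid_apply, fstL_apply, extL_apply, exch_apply,
    LinearEquiv.trans_apply, TensorProduct.congr_tmul, LinearEquiv.refl_apply,
    TensorProduct.tensorTensorTensorComm_tmul, TensorProduct.assoc_tmul,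
    TensorProduct.assoc_symm_tmul, TensorProduct.comm_tmul]
  generalize U (k2 ⊗ₜ[ℂ] h3) = w
  induction w using TensorProduct.induction_on with
  | zero => simp
  | tmul x y => simp
  | add x y hx hy => simp only [map_add, TensorProduct.tmul_add, TensorProduct.add_tmul, hx, hy]

lemma cPsi_stepMid :
    stepMid (B := X) (legB U) = conj shufPsi (fstL (stepMid U)) := by
  apply LinearEquiv.toLinearMap_injective
  ext h1 k2 h3 k4 h5 k6
  simp only [TensorProduct.AlgebraTensorModule.curry_apply, TensorProduct.curry_apply,
    LinearMap.coe_restrictScalars, LinearEquiv.coe_coe, conj_apply, shufPsi, legB,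
    endTail_apply, stepMid_apply, fstL_apply, extL_apply, exch_apply,
    LinearEquiv.trans_apply, TensorProduct.congr_tmul, LinearEquiv.refl_apply,
    TensorProduct.tensorTensorTensorComm_tmul, TensorProduct.assoc_tmul,
    TensorProduct.assoc_symm_tmul, TensorProduct.comm_tmul]
  generalize U (k2 ⊗ₜ[ℂ] h5) = w
  induction w using TensorProduct.induction_on with
  | zero => simp
  | tmul x y => simp
  | add x y hx hy => simp only [map_add, TensorProduct.tmul_add, TensorProduct.add_tmul, hx, hy]

lemma cTheta_endTailA :
    endTail (R := X) (legA W) = conj shufTheta (fstL (stepMid W)) := by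
  apply LinearEquiv.toLinearMap_injective
  ext h1 k2 h3 k4 h5 k6
  simp only [TensorProduct.AlgebraTensorModule.curry_apply, TensorProduct.curry_apply,
    LinearMap.coe_restrictScalars, LinearEquiv.coe_coe, conj_apply, shufTheta, legA,
    endTail_apply, stepMid_apply, fstL_apply, extL_apply, exch_apply,
    LinearEquiv.trans_apply, TensorProduct.congr_tmul, LinearEquiv.refl_apply,
    TensorProduct.tensorTensorTensorComm_tmul, TensorProduct.assoc_tmul,
    TensorProduct.assoc_symm_tmul, TensorProduct.comm_tmul]
  generalize W (h1 ⊗ₜ[ℂ] h3) = w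
  induction w using TensorProduct.induction_on with
  | zero => simp
  | tmul x y => simp
  | add x y hx hy => simp only [map_add, TensorProduct.tmul_add, TensorProduct.add_tmul, hx, hy]

lemma cTheta_endTailB :
    endTail (R := X) (legB U) = conj shufTheta (fstL (extL U)) := by
  apply LinearEquiv.toLinearMap_injective
  ext h1 k2 h3 k4 h5 k6
  simp only [TensorProduct.AlgebraTensorModule.curry_apply, TensorProduct.curry_apply,
    LinearMap.coe_restrictScalars, LinearEquiv.coe_coe, conj_apply, shufTheta, legB,
    endTail_apply, stepMid_apply, fstL_apply, extL_apply, exch_apply,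
    LinearEquiv.trans_apply, TensorProduct.congr_tmul, LinearEquiv.refl_apply,
    TensorProduct.tensorTensorTensorComm_tmul, TensorProduct.assoc_tmul,
    TensorProduct.assoc_symm_tmul, TensorProduct.comm_tmul]
  generalize U (k2 ⊗ₜ[ℂ] h3) = w
  induction w using TensorProduct.induction_on with
  | zero => simp
  | tmul x y => simp
  | add x y hx hy => simp only [map_add, TensorProduct.tmul_add, TensorProduct.add_tmul, hx, hy]

lemma cTheta_extLB :
    extL (A := X) (legB U) = conj shufTheta (extL (endTail U)) := by
  apply LinearEquiv.toLinearMap_injective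
  ext h1 k2 h3 k4 h5 k6
  simp only [TensorProduct.AlgebraTensorModule.curry_apply, TensorProduct.curry_apply,
    LinearMap.coe_restrictScalars, LinearEquiv.coe_coe, conj_apply, shufTheta, legB,
    endTail_apply, stepMid_apply, fstL_apply, extL_apply, exch_apply,
    LinearEquiv.trans_apply, TensorProduct.congr_tmul, LinearEquiv.refl_apply,
    TensorProduct.tensorTensorTensorComm_tmul, TensorProduct.assoc_tmul,
    TensorProduct.assoc_symm_tmul, TensorProduct.comm_tmul]
  generalize U (k4 ⊗ₜ[ℂ] h5) = w
  induction w using TensorProduct.induction_on with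
  | zero => simp
  | tmul x y => simp
  | add x y hx hy => simp only [map_add, TensorProduct.tmul_add, TensorProduct.add_tmul, hx, hy]

lemma cXi_stepMidA :
    stepMid (B := X) (legA W) = conj shufXi (fstL (endTail W)) := by
  apply LinearEquiv.toLinearMap_injective
  ext h1 k2 h3 k4 h5 k6
  simp only [TensorProduct.AlgebraTensorModule.curry_apply, TensorProduct.curry_apply,
    LinearMap.coe_restrictScalars, LinearEquiv.coe_coe, conj_apply, shufXi, legA,
    endTail_apply, stepMid_apply, fstL_apply, extL_apply, exch_apply,
    LinearEquiv.trans_apply, TensorProduct.congr_tmul, LinearEquiv.refl_apply,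
    TensorProduct.tensorTensorTensorComm_tmul, TensorProduct.assoc_tmul,
    TensorProduct.assoc_symm_tmul, TensorProduct.comm_tmul]
  generalize W (h1 ⊗ₜ[ℂ] h5) = w
  induction w using TensorProduct.induction_on with
  | zero => simp
  | tmul x y => simp
  | add x y hx hy => simp only [map_add, TensorProduct.tmul_add, TensorProduct.add_tmul, hx, hy]

lemma cXi_endTailB :
    endTail (R := X) (legB U) = conj shufXi (extL (endTail U)) := by
  apply LinearEquiv.toLinearMap_injective
  ext h1 k2 h3 k4 h5 k6
  simp only [TensorProduct.AlgebraTensorModule.curry_apply, TensorProduct.curry_apply,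
    LinearMap.coe_restrictScalars, LinearEquiv.coe_coe, conj_apply, shufXi, legB,
    endTail_apply, stepMid_apply, fstL_apply, extL_apply, exch_apply,
    LinearEquiv.trans_apply, TensorProduct.congr_tmul, LinearEquiv.refl_apply,
    TensorProduct.tensorTensorTensorComm_tmul, TensorProduct.assoc_tmul,
    TensorProduct.assoc_symm_tmul, TensorProduct.comm_tmul]
  generalize U (k2 ⊗ₜ[ℂ] h3) = w
  induction w using TensorProduct.induction_on with
  | zero => simp
  | tmul x y => simp
  | add x y hx hy => simp only [map_add, TensorProduct.tmul_add, TensorProduct.add_tmul, hx, hy]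

end Conjugation

end MU

open MU in
/-- if `W` is a multiplicative unitary on `H ⊗ H` and `U ∈ U(K ⊗ H)` is a
right representation of `W`, then `M := W₁₃ U₂₃ ∈ U((H ⊗ K) ⊗ (H ⊗ K))` is itself a
multiplicative unitary, i.e. satisfies the pentagon equation
`M₃₄₅₆ M₁₂₃₄ = M₁₂₃₄ M₁₂₅₆ M₃₄₅₆` on the pair-grouped triple tensor product `(H ⊗ K)^{⊗3}`. -/
theorem pairOp_isMultiplicative
    {H K : Type*}
    [NormedAddCommGroup H] [InnerProductSpace ℂ H] [CompleteSpace H]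
    [NormedAddCommGroup K] [InnerProductSpace ℂ K] [CompleteSpace K]
    (W : (H ⊗[ℂ] H) ≃ₗ[ℂ] (H ⊗[ℂ] H))
    (U : (K ⊗[ℂ] H) ≃ₗ[ℂ] (K ⊗[ℂ] H))
    (hW : IsMultiplicative W) (hU : IsRightRep W U) :
    IsMultiplicative (pairOp W U) := by
  have hW' : extL W * endTail W = endTail W * stepMid W * extL W := hW
  have hU' : extL W * endTail U = endTail U * stepMid U * extL W := hU
  show extL (pairOp W U) * endTail (pairOp W U) =
    endTail (pairOp W U) * stepMid (pairOp W U) * extL (pairOp W U)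
  rw [pairOp_eq, extL_mul, endTail_mul, stepMid_mul]
  have rb : extL (A := H ⊗[ℂ] K) (legA W) * endTail (R := H ⊗[ℂ] K) (legA W)
      = endTail (R := H ⊗[ℂ] K) (legA W) * stepMid (B := H ⊗[ℂ] K) (legA W)
        * extL (A := H ⊗[ℂ] K) (legA W) := by
    rw [cPhi_extL, cPhi_endTail, cPhi_stepMid]
    simp only [← MU.conj_mul, ← fstL_mul]
    rw [hW']
  have rd : extL (A := H ⊗[ℂ] K) (legA W) * endTail (R := H ⊗[ℂ] K) (legB U)
      = endTail (R := H ⊗[ℂ] K) (legB U) * stepMid (B := H ⊗[ℂ] K) (legB U)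
        * extL (A := H ⊗[ℂ] K) (legA W) := by
    rw [cPsi_extL, cPsi_endTail, cPsi_stepMid]
    simp only [← MU.conj_mul, ← fstL_mul]
    rw [hU']
  have ra : endTail (R := H ⊗[ℂ] K) (legA W) * extL (A := H ⊗[ℂ] K) (legB U) = extL (A := H ⊗[ℂ] K) (legB U) * endTail (R := H ⊗[ℂ] K) (legA W) := by
    rw [cTheta_endTailA, cTheta_extLB]
    simp only [← MU.conj_mul]
    rw [fstL_extL_comm]
  have rc : endTail (R := H ⊗[ℂ] K) (legB U) * extL (A := H ⊗[ℂ] K) (legB U) = extL (A := H ⊗[ℂ] K) (legB U) * endTail (R := H ⊗[ℂ] K) (legB U) := by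
    rw [cTheta_endTailB, cTheta_extLB]
    simp only [← MU.conj_mul]
    rw [fstL_extL_comm]
  have re : stepMid (B := H ⊗[ℂ] K) (legA W) * endTail (R := H ⊗[ℂ] K) (legB U) = endTail (R := H ⊗[ℂ] K) (legB U) * stepMid (B := H ⊗[ℂ] K) (legA W) := by
    rw [cXi_stepMidA, cXi_endTailB]
    simp only [← MU.conj_mul]
    rw [fstL_extL_comm]
  simp only [mul_assoc]
  rw [mul_swap_assoc ra.symm, ← rc, pent_assoc rb, pent_assoc rd, mul_swap_assoc re]
end
end
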